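/- arXiv:1911.00433 — 3 statements merged into one kernel-verified Lean document; each statement's English description precedes it below -/
import Mathlib

section
/- Let V be a real Banach space, F : V → ℝ convex and continuous, and x̄ ∈ V. Then there exists a continuous linear functional L ∈ V* with L(h) ≤ F'(x̄, h) for all h ∈ V (i.e. L ∈ ∂F(x̄)) and inf{L(h) : ‖h‖ ≤ 1} = inf{F'(x̄, h) : ‖h‖ ≤ 1}. -/
open Filter Topology

/-!
The directional derivative `F'` of a convex function is sublinear, and `|F' h| ≤ K ‖h‖` for a
Lipschitz constant `K` of `F` near `x̄` (continuous convex functions are locally Lipschitz).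
If `m` is the infimum of `F'` on the unit ball, homogeneity gives `m ‖h‖ ≤ F' h`, i.e.
`0 ≤ F' h + (-m) ‖-h‖`. The sandwich form of Hahn–Banach then yields a linear `L` below both
`F'` and `-m ‖·‖`; the latter bound makes `L` continuous with `m ≤ L` on the unit ball, while
`L ≤ F'` gives the reverse inequality between the infima.
-/

theorem csInf_image_eq_of_le {α β : Type*} [ConditionallyCompleteLattice β] {f g : α → β}
    {s : Set α} (hs : s.Nonempty) (hfg : ∀ x ∈ s, f x ≤ g x) (hf : ∀ x ∈ s, sInf (g '' s) ≤ f x) :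
    sInf (f '' s) = sInf (g '' s) := by
  have hbdd : BddBelow (f '' s) := ⟨sInf (g '' s), by rintro _ ⟨x, hx, rfl⟩; exact hf x hx⟩
  refine le_antisymm (le_csInf (hs.image g) ?_) (le_csInf (hs.image f) ?_)
  · rintro _ ⟨x, hx, rfl⟩
    exact (csInf_le hbdd ⟨x, hx, rfl⟩).trans (hfg x hx)
  · rintro _ ⟨x, hx, rfl⟩
    exact hf x hx

structure IsSublinear {E : Type*} [AddCommGroup E] [Module ℝ E] (p : E → ℝ) : Prop where
  map_smul_of_pos : ∀ c : ℝ, 0 < c → ∀ x, p (c • x) = c * p x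
  map_add_le : ∀ x y, p (x + y) ≤ p x + p y

namespace IsSublinear

variable {E : Type*} [AddCommGroup E] [Module ℝ E] {p q : E → ℝ}

theorem map_zero (hp : IsSublinear p) : p 0 = 0 := by
  have h := hp.map_smul_of_pos 2 two_pos 0
  rw [smul_zero] at h
  linarith

theorem prod (hp : IsSublinear p) (hq : IsSublinear q) :
    IsSublinear fun z : E × E => p z.1 + q z.2 where
  map_smul_of_pos c hc z := by
    simp only [Prod.smul_fst, Prod.smul_snd, hp.map_smul_of_pos c hc, hq.map_smul_of_pos c hc]
    ring
  map_add_le z w := by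
    simp only [Prod.fst_add, Prod.snd_add]
    linarith [hp.map_add_le z.1 w.1, hq.map_add_le z.2 w.2]

theorem exists_linearMap_le (hp : IsSublinear p) (hq : IsSublinear q)
    (hpq : ∀ x, 0 ≤ p x + q (-x)) : ∃ g : E →ₗ[ℝ] ℝ, (∀ x, g x ≤ p x) ∧ ∀ x, g x ≤ q x := by
  -- Extend `0` from the antidiagonal `{(x, -x)}` of `E × E` below `(x, y) ↦ p x + q y`.
  obtain ⟨Λ, hΛ_anti, hΛ⟩ := exists_extension_of_le_sublinear
    ⟨LinearMap.range (LinearMap.id.prod (-LinearMap.id)), 0⟩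
    (fun z : E × E => p z.1 + q z.2)
    (hp.prod hq).map_smul_of_pos (hp.prod hq).map_add_le
    (by rintro ⟨_, x, rfl⟩; simpa using hpq x)
  have hΛ_symm : ∀ x, Λ (x, 0) = Λ (0, x) := by
    intro x
    have h0 : Λ (x, -x) = 0 := hΛ_anti ⟨(x, -x), x, rfl⟩
    calc Λ (x, 0) = Λ ((x, -x) + (0, x)) := by simp
      _ = Λ (0, x) := by rw [map_add, h0, zero_add]
  refine ⟨Λ.comp (LinearMap.inl ℝ E E), fun x => ?_, fun x => ?_⟩
  · simpa [hq.map_zero] using hΛ (x, 0)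
  · simpa [hΛ_symm, hp.map_zero] using hΛ (0, x)

end IsSublinear

section Normed

variable {V : Type*} [NormedAddCommGroup V] [NormedSpace ℝ V]

theorem isSublinear_const_mul_norm {C : ℝ} (hC : 0 ≤ C) : IsSublinear fun x : V => C * ‖x‖ where
  map_smul_of_pos c hc x := by rw [norm_smul, Real.norm_of_nonneg hc.le]; ring
  map_add_le x y := by rw [← mul_add]; exact mul_le_mul_of_nonneg_left (norm_add_le x y) hC

theorem IsSublinear.sInf_image_closedBall_mul_norm_le {p : V → ℝ} (hp : IsSublinear p)
    (hbdd : BddBelow (p '' Metric.closedBall 0 1)) (h : V) :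
    sInf (p '' Metric.closedBall 0 1) * ‖h‖ ≤ p h := by
  rcases eq_or_ne h 0 with rfl | hh
  · simp [hp.map_zero]
  have hn : 0 < ‖h‖ := norm_pos_iff.2 hh
  have hmem : ‖h‖⁻¹ • h ∈ Metric.closedBall (0 : V) 1 := by
    simp [norm_smul, hn.ne']
  calc sInf (p '' Metric.closedBall 0 1) * ‖h‖ ≤ p (‖h‖⁻¹ • h) * ‖h‖ :=
        mul_le_mul_of_nonneg_right (csInf_le hbdd ⟨_, hmem, rfl⟩) hn.le
    _ = p h := by
        rw [hp.map_smul_of_pos _ (inv_pos.2 hn), mul_comm, ← mul_assoc, mul_inv_cancel₀ hn.ne',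
          one_mul]

theorem LinearMap.norm_apply_le_of_le_mul_norm {C : ℝ} (g : V →ₗ[ℝ] ℝ)
    (hg : ∀ x, g x ≤ C * ‖x‖) (x : V) : ‖g x‖ ≤ C * ‖x‖ := by
  rw [Real.norm_eq_abs, abs_le]
  refine ⟨?_, hg x⟩
  have h := hg (-x)
  rw [map_neg, norm_neg] at h
  linarith

end Normed

def HasDirectionalDerivAt {E : Type*} [AddCommGroup E] [Module ℝ E] (F F' : E → ℝ) (x : E) :
    Prop :=
  ∀ h, Tendsto (fun t : ℝ => (F (x + t • h) - F x) / t) (𝓝[>] 0) (𝓝 (F' h))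

namespace HasDirectionalDerivAt

section Module

variable {E : Type*} [AddCommGroup E] [Module ℝ E] {F F' : E → ℝ} {x : E}

theorem map_smul_of_pos (hF : HasDirectionalDerivAt F F' x) {c : ℝ} (hc : 0 < c) (h : E) :
    F' (c • h) = c * F' h := by
  have hmul : Tendsto (c * ·) (𝓝[>] (0 : ℝ)) (𝓝[>] 0) :=
    tendsto_iff_comap.2 (comap_mulLeft_nhdsGT_zero hc).ge
  refine tendsto_nhds_unique (hF (c • h)) (((hF h).comp hmul).const_mul c |>.congr' ?_)
  filter_upwards [self_mem_nhdsWithin] with t (ht : 0 < t)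
  rw [Function.comp_apply, smul_smul, mul_comm c t]
  field_simp

theorem map_add_le (hF : HasDirectionalDerivAt F F' x) (hconv : ConvexOn ℝ Set.univ F)
    (h₁ h₂ : E) : F' (h₁ + h₂) ≤ F' h₁ + F' h₂ := by
  have hmul : Tendsto (2 * ·) (𝓝[>] (0 : ℝ)) (𝓝[>] 0) :=
    tendsto_iff_comap.2 (comap_mulLeft_nhdsGT_zero two_pos).ge
  refine le_of_tendsto_of_tendsto (hF (h₁ + h₂)) (((hF h₁).comp hmul).add ((hF h₂).comp hmul)) ?_
  filter_upwards [self_mem_nhdsWithin] with t (ht : 0 < t)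
  -- `x + t • (h₁ + h₂)` is the midpoint of `x + 2t • h₁` and `x + 2t • h₂`.
  have hmid := hconv.2 (Set.mem_univ (x + (2 * t) • h₁)) (Set.mem_univ (x + (2 * t) • h₂))
    (by norm_num : (0 : ℝ) ≤ 1 / 2) (by norm_num : (0 : ℝ) ≤ 1 / 2) (by norm_num)
  rw [show (1 / 2 : ℝ) • (x + (2 * t) • h₁) + (1 / 2 : ℝ) • (x + (2 * t) • h₂)
      = x + t • (h₁ + h₂) by module, smul_eq_mul, smul_eq_mul] at hmid
  simp only [Function.comp_apply]
  rw [← add_div, div_le_div_iff₀ ht (by positivity)]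
  nlinarith

theorem isSublinear (hF : HasDirectionalDerivAt F F' x) (hconv : ConvexOn ℝ Set.univ F) :
    IsSublinear F' :=
  ⟨fun _ hc => hF.map_smul_of_pos hc, hF.map_add_le hconv⟩

end Module

theorem abs_le_mul_norm {V : Type*} [NormedAddCommGroup V] [NormedSpace ℝ V] {F F' : V → ℝ}
    {x : V} (hF : HasDirectionalDerivAt F F' x) {K : NNReal} {s : Set V}
    (hK : LipschitzOnWith K F s) (hs : s ∈ 𝓝 x) (h : V) : |F' h| ≤ K * ‖h‖ := by
  have hline : Tendsto (fun t : ℝ => x + t • h) (𝓝[>] 0) (𝓝 x) := by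
    have hcont : Continuous fun t : ℝ => x + t • h := by fun_prop
    simpa using (hcont.tendsto 0).mono_left nhdsWithin_le_nhds
  refine le_of_tendsto (hF h).abs ?_
  filter_upwards [self_mem_nhdsWithin, hline hs] with t (ht : 0 < t) hts
  have hdist := hK.dist_le_mul _ hts _ (mem_of_mem_nhds hs)
  rw [Real.dist_eq, dist_eq_norm, add_sub_cancel_left, norm_smul,
    Real.norm_of_nonneg ht.le] at hdist
  rw [abs_div, abs_of_pos ht, div_le_iff₀ ht]
  linarith

end HasDirectionalDerivAt

theorem sandwich_theorem_for_subdifferentials_general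
    {V : Type*} [NormedAddCommGroup V] [NormedSpace ℝ V]
    (F : V → ℝ) (hconv : ConvexOn ℝ Set.univ F) (hcont : Continuous F)
    (xbar : V) (F' : V → ℝ)
    (hF' : ∀ h : V, Tendsto (fun t : ℝ => (F (xbar + t • h) - F xbar) / t)
      (nhdsWithin 0 (Set.Ioi 0)) (nhds (F' h))) :
    ∃ L : V →L[ℝ] ℝ, (∀ h : V, L h ≤ F' h) ∧
      sInf ((fun h => L h) '' Metric.closedBall (0 : V) 1) =
        sInf (F' '' Metric.closedBall (0 : V) 1) := by
  have hF : HasDirectionalDerivAt F F' xbar := hF'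
  have hsub := hF.isSublinear hconv
  obtain ⟨K, s, hs, hK⟩ := locallyLipschitzOn_univ.1
    ((hconv.locallyLipschitzOn_iff_continuousOn isOpen_univ).2 hcont.continuousOn) xbar
  set B := Metric.closedBall (0 : V) 1
  have hbdd : BddBelow (F' '' B) := by
    refine ⟨-K, ?_⟩
    rintro _ ⟨h, hh, rfl⟩
    have := (abs_le.1 (hF.abs_le_mul_norm hK hs h)).1
    have hh' : ‖h‖ ≤ 1 := mem_closedBall_zero_iff.1 hh
    nlinarith [K.2]
  set m := sInf (F' '' B)
  have hm : m ≤ 0 := csInf_le hbdd ⟨0, Metric.mem_closedBall_self zero_le_one, hsub.map_zero⟩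
  obtain ⟨g, hgF', hgm⟩ := hsub.exists_linearMap_le (isSublinear_const_mul_norm (neg_nonneg.2 hm))
    fun h => by
      have := hsub.sInf_image_closedBall_mul_norm_le hbdd h
      rw [norm_neg]; linarith
  refine ⟨g.mkContinuous (-m) (g.norm_apply_le_of_le_mul_norm hgm), hgF',
    csInf_image_eq_of_le ⟨0, Metric.mem_closedBall_self zero_le_one⟩ (fun h _ => hgF' h) ?_⟩
  intro h hh
  have hgh := (abs_le.1 (g.norm_apply_le_of_le_mul_norm hgm h)).1
  have hh' : ‖h‖ ≤ 1 := mem_closedBall_zero_iff.1 hh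
  simp only [LinearMap.mkContinuous_apply]
  nlinarith

/-- Sandwich theorem for subdifferentials: for a convex continuous `F` there is a
continuous linear functional below the directional derivative at `x̄`, with the same
infimum over the unit ball. -/
theorem sandwich_theorem_for_subdifferentials
    {V : Type*} [NormedAddCommGroup V] [NormedSpace ℝ V] [CompleteSpace V]
    (F : V → ℝ) (hconv : ConvexOn ℝ Set.univ F) (hcont : Continuous F)
    (xbar : V) (F' : V → ℝ)
    (hF' : ∀ h : V, Tendsto (fun t : ℝ => (F (xbar + t • h) - F xbar) / t)
      (nhdsWithin 0 (Set.Ioi 0)) (nhds (F' h))) :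
    ∃ L : V →L[ℝ] ℝ, (∀ h : V, L h ≤ F' h) ∧
      sInf ((fun h => L h) '' Metric.closedBall (0 : V) 1) =
        sInf (F' '' Metric.closedBall (0 : V) 1) :=
  sandwich_theorem_for_subdifferentials_general F hconv hcont xbar F' hF'
end

section
/- Let B be a real Banach space, Z a closed subspace of B that is not proximinal, and f₀ ∈ B a point whose distance to Z is not attained. Then for every ε > 0 there exist f_T ∈ Z and L ∈ B* with L ∈ J(f₀ + f_T) (i.e. L(f₀ + f_T) = ‖L‖·‖f₀ + f_T‖ and ‖L‖ = ‖f₀ + f_T‖) such that the restriction of L to Z has norm less than ε. -/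
/-!
By Ekeland's variational principle applied to `z ↦ ‖f₀ + z‖` on the complete space `Z`, there is
`fT ∈ Z` with `‖f₀ + fT‖ ≤ ‖f₀‖` such that `x = f₀ + fT` satisfies `‖x‖ ≤ ‖x - z‖ + δ‖z‖` for all
`z ∈ Z`. This says exactly that `x` is a norming point for the seminorm
`w ↦ inf_{z ∈ Z} (‖w - z‖ + δ‖z‖)`, so Hahn–Banach yields `φ` with `‖φ‖ ≤ 1`, `φ x = ‖x‖` and
`|φ z| ≤ δ‖z‖` on `Z`; then `L = ‖x‖ • φ ∈ J(x)` and `‖L|_Z‖ ≤ ‖f₀‖ δ`, which is `< ε` for small `δ`.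
-/

open Set Filter NNReal

section Ekeland

variable {X : Type*} [PseudoMetricSpace X] {f : X → ℝ} {δ : ℝ}

def ekelandSet (f : X → ℝ) (δ : ℝ) (x : X) : Set X := {y | f y + δ * dist y x ≤ f x}

theorem mem_ekelandSet {x y : X} : y ∈ ekelandSet f δ x ↔ f y + δ * dist y x ≤ f x := Iff.rfl

theorem self_mem_ekelandSet (x : X) : x ∈ ekelandSet f δ x := by
  simp [mem_ekelandSet]

theorem ekelandSet_subset (hδ : 0 ≤ δ) {x y : X} (hy : y ∈ ekelandSet f δ x) :
    ekelandSet f δ y ⊆ ekelandSet f δ x := fun z hz => by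
  have := mul_le_mul_of_nonneg_left (dist_triangle z y x) hδ
  rw [mem_ekelandSet] at hy hz ⊢
  linarith

theorem LowerSemicontinuous.isClosed_ekelandSet (hf : LowerSemicontinuous f) (x : X) :
    IsClosed (ekelandSet f δ x) :=
  (hf.add (continuous_const.mul (continuous_id.dist continuous_const)).lowerSemicontinuous)
    |>.isClosed_preimage (f x)

theorem exists_mem_ekelandSet_forall_le_add (hbdd : BddBelow (range f)) (x : X) {η : ℝ}
    (hη : 0 < η) :
    ∃ y ∈ ekelandSet f δ x, ∀ z ∈ ekelandSet f δ x, f y ≤ f z + η := by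
  obtain ⟨_, ⟨y, hy, rfl⟩, hlt⟩ :=
    Real.lt_sInf_add_pos ((nonempty_of_mem (self_mem_ekelandSet x)).image f) hη
  exact ⟨y, hy, fun z hz => hlt.le.trans <| by
    gcongr; exact csInf_le (hbdd.mono (image_subset_range _ _)) (mem_image_of_mem f hz)⟩

theorem dist_le_of_mem_ekelandSet (hδ : 0 < δ) {x y z : X} {η : ℝ} (hy : y ∈ ekelandSet f δ x)
    (hmin : ∀ w ∈ ekelandSet f δ x, f y ≤ f w + δ * η) (hz : z ∈ ekelandSet f δ y) :
    dist z y ≤ η := by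
  have := hmin z (ekelandSet_subset hδ.le hy hz)
  rw [mem_ekelandSet] at hz
  nlinarith

theorem exists_seq_mem_ekelandSet (hbdd : BddBelow (range f)) (hδ : 0 < δ) (x₀ : X) :
    ∃ u : ℕ → X, u 0 = x₀ ∧ (∀ n, u (n + 1) ∈ ekelandSet f δ (u n)) ∧
      ∀ n, ∀ z ∈ ekelandSet f δ (u n), f (u (n + 1)) ≤ f z + δ * (1 / 2) ^ n := by
  choose! next hnext using fun (n : ℕ) (x : X) =>
    exists_mem_ekelandSet_forall_le_add (δ := δ) hbdd x (by positivity : 0 < δ * (1 / 2) ^ n)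
  exact ⟨fun n => Nat.rec x₀ next n, rfl, fun n => (hnext n _).1, fun n => (hnext n _).2⟩

/-- Ekeland's variational principle. -/
theorem LowerSemicontinuous.exists_le_forall_le_add_mul_dist [CompleteSpace X]
    (hf : LowerSemicontinuous f) (hbdd : BddBelow (range f)) (hδ : 0 < δ) (x₀ : X) :
    ∃ x, f x ≤ f x₀ ∧ ∀ y, f x ≤ f y + δ * dist y x := by
  obtain ⟨u, rfl, hu, hmin⟩ := exists_seq_mem_ekelandSet hbdd hδ x₀
  have hanti : Antitone fun n => ekelandSet f δ (u n) :=
    antitone_nat_of_succ_le fun n => ekelandSet_subset hδ.le (hu n)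
  have hcauchy : CauchySeq fun n => u (n + 1) :=
    cauchySeq_of_le_geometric (1 / 2) 1 (by norm_num) fun n => by
      rw [dist_comm, one_mul]
      exact dist_le_of_mem_ekelandSet hδ (hu n) (hmin n) (hu (n + 1))
  obtain ⟨x, hx⟩ := cauchySeq_tendsto_of_complete hcauchy
  have hxS : ∀ n, x ∈ ekelandSet f δ (u n) := fun n =>
    (hf.isClosed_ekelandSet (u n)).mem_of_tendsto hx <|
      eventually_atTop.2 ⟨n, fun m hm => hanti (by omega) (hu m)⟩
  refine ⟨x, ?_, fun y => ?_⟩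
  · have := hxS 0
    rw [mem_ekelandSet] at this
    nlinarith [dist_nonneg (x := x) (y := u 0)]
  by_contra! hy
  have hyS : ∀ n, y ∈ ekelandSet f δ (u n) := fun n => ekelandSet_subset hδ.le (hxS n) hy.le
  -- `x` lies below every `u (n + 1)`, which is `δ 2⁻ⁿ`-almost minimal on a set containing `y`
  have hxy : ∀ n : ℕ, f x ≤ f y + δ * (1 / 2) ^ n := fun n => by
    have := hxS (n + 1)
    rw [mem_ekelandSet] at this
    nlinarith [hmin n y (hyS n), dist_nonneg (x := x) (y := u (n + 1))]
  have : f x ≤ f y := ge_of_tendsto'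
    (by simpa using (tendsto_pow_atTop_nhds_zero_of_lt_one (by norm_num : (0:ℝ) ≤ 1 / 2)
      (by norm_num)).const_mul δ |>.const_add (f y)) hxy
  nlinarith [dist_nonneg (x := y) (y := x)]

end Ekeland

theorem Seminorm.exists_dual_vector {E : Type*} [AddCommGroup E] [Module ℝ E]
    (p : Seminorm ℝ E) (x : E) : ∃ g : Module.Dual ℝ E, g x = p x ∧ ∀ y, |g y| ≤ p y := by
  have hker : ∀ c : ℝ, c • x = 0 → c • p x = 0 := fun c hc => by
    have := map_smul_eq_mul p c x
    rw [hc, map_zero, Real.norm_eq_abs, eq_comm, mul_eq_zero] at this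
    rcases this with h | h
    · simp [abs_eq_zero.1 h]
    · simp [h]
  set f := LinearPMap.mkSpanSingleton' (σ := RingHom.id ℝ) x (p x) hker
  have hf : ∀ v : f.domain, f v ≤ p v := by
    rintro ⟨v, hv⟩
    obtain ⟨c, rfl⟩ := Submodule.mem_span_singleton.1 hv
    rw [LinearPMap.mkSpanSingleton'_apply, map_smul_eq_mul, smul_eq_mul, Real.norm_eq_abs]
    gcongr
    exact le_abs_self c
  obtain ⟨g, hgf, hgp⟩ := Module.Dual.exists_extension_of_le_seminorm_real f.domain f.toFun hf
  exact ⟨g, (hgf ⟨x, Submodule.mem_span_singleton_self x⟩).trans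
    (LinearPMap.mkSpanSingleton'_apply_self _ _ _ _), hgp⟩

section Normed

variable {E : Type*} [SeminormedAddCommGroup E] [NormedSpace ℝ E]

theorem Submodule.bddBelow_range_norm_sub_add (Z : Submodule ℝ E) (δ : ℝ≥0) (w : E) :
    BddBelow (range fun z : Z => ‖w - z‖ + δ * ‖(z : E)‖) :=
  ⟨0, by rintro _ ⟨z, rfl⟩; positivity⟩

/-- The infimal convolution of `‖·‖` with `δ‖·‖` restricted to `Z`. Its dual unit ball consists of
the functionals of norm `≤ 1` whose restriction to `Z` has norm `≤ δ`. -/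
noncomputable def Submodule.infConvNorm (Z : Submodule ℝ E) (δ : ℝ≥0) : Seminorm ℝ E :=
  Seminorm.ofSMulLE (fun w => ⨅ z : Z, ‖w - z‖ + δ * ‖(z : E)‖)
    (le_antisymm (by simpa using ciInf_le (Z.bddBelow_range_norm_sub_add δ 0) 0)
      (le_ciInf fun _ => by positivity))
    (fun w₁ w₂ => le_ciInf_add_ciInf fun z₁ z₂ =>
      (ciInf_le (Z.bddBelow_range_norm_sub_add δ _) (z₁ + z₂)).trans <| by
        rw [Submodule.coe_add, add_sub_add_comm]
        nlinarith [norm_add_le (w₁ - z₁) (w₂ - z₂), norm_add_le (z₁ : E) z₂, δ.2])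
    (fun r w => by
      rw [Real.mul_iInf_of_nonneg (norm_nonneg r)]
      refine le_ciInf fun z => (ciInf_le (Z.bddBelow_range_norm_sub_add δ _) (r • z)).trans_eq ?_
      simp only [Submodule.coe_smul, ← smul_sub, norm_smul]
      ring)

namespace Submodule

variable (Z : Submodule ℝ E) (δ : ℝ≥0)

theorem infConvNorm_le (w : E) {z : E} (hz : z ∈ Z) : Z.infConvNorm δ w ≤ ‖w - z‖ + δ * ‖z‖ :=
  ciInf_le (Z.bddBelow_range_norm_sub_add δ w) ⟨z, hz⟩

theorem infConvNorm_le_norm (w : E) : Z.infConvNorm δ w ≤ ‖w‖ := by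
  simpa using Z.infConvNorm_le δ w Z.zero_mem

theorem infConvNorm_le_of_mem {z : E} (hz : z ∈ Z) : Z.infConvNorm δ z ≤ δ * ‖z‖ := by
  simpa using Z.infConvNorm_le δ z hz

variable {Z δ}

theorem infConvNorm_eq_norm {x : E} (hx : ∀ z ∈ Z, ‖x‖ ≤ ‖x - z‖ + δ * ‖z‖) :
    Z.infConvNorm δ x = ‖x‖ :=
  (Z.infConvNorm_le_norm δ x).antisymm (le_ciInf fun z => hx z z.2)

theorem exists_dual_vector_of_forall_norm_le {x : E} (hx : ∀ z ∈ Z, ‖x‖ ≤ ‖x - z‖ + δ * ‖z‖) :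
    ∃ φ : StrongDual ℝ E, ‖φ‖ ≤ 1 ∧ φ x = ‖x‖ ∧ ‖φ.comp Z.subtypeL‖ ≤ δ := by
  obtain ⟨g, hgx, hg⟩ := (Z.infConvNorm δ).exists_dual_vector x
  let φ := g.mkContinuous 1 fun y => by
    simpa using (hg y).trans (Z.infConvNorm_le_norm δ y)
  refine ⟨φ, LinearMap.mkContinuous_norm_le _ zero_le_one _, hgx.trans (infConvNorm_eq_norm hx),
    ContinuousLinearMap.opNorm_le_bound _ δ.2 fun z => ?_⟩
  exact (hg z).trans (Z.infConvNorm_le_of_mem δ z.2)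

theorem exists_mem_forall_norm_add_le [CompleteSpace E] (hZ : IsClosed (Z : Set E)) (f₀ : E)
    {δ : ℝ} (hδ : 0 < δ) :
    ∃ fT ∈ Z, ‖f₀ + fT‖ ≤ ‖f₀‖ ∧ ∀ z ∈ Z, ‖f₀ + fT‖ ≤ ‖f₀ + fT - z‖ + δ * ‖z‖ := by
  have := hZ.completeSpace_coe
  have hf : Continuous fun z : Z => ‖f₀ + z‖ := by fun_prop
  obtain ⟨⟨fT, hfT⟩, h₀, hmin⟩ :=
    hf.lowerSemicontinuous.exists_le_forall_le_add_mul_dist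
      ⟨0, by rintro _ ⟨z, rfl⟩; positivity⟩ hδ 0
  refine ⟨fT, hfT, by simpa using h₀, fun z hz => ?_⟩
  simpa [dist_eq_norm, add_sub_assoc] using hmin ⟨fT - z, Z.sub_mem hfT hz⟩

end Submodule

theorem norm_smul_eq_of_norm_le_one {φ : StrongDual ℝ E} (hφ : ‖φ‖ ≤ 1) {x : E}
    (hx : φ x = ‖x‖) : ‖‖x‖ • φ‖ = ‖x‖ := by
  rw [norm_smul, norm_norm]
  rcases (norm_nonneg x).eq_or_lt with h | h
  · simp [← h]
  · have : ‖x‖ ≤ ‖φ‖ * ‖x‖ := calc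
      ‖x‖ = ‖φ x‖ := by rw [hx, norm_norm]
      _ ≤ ‖φ‖ * ‖x‖ := φ.le_opNorm x
    rw [hφ.antisymm (le_of_mul_le_mul_right (by simpa using this) h), mul_one]

end Normed

theorem approximate_duality_element_of_not_proximinal_general
    {B : Type*} [NormedAddCommGroup B] [NormedSpace ℝ B] [CompleteSpace B]
    (Z : Submodule ℝ B) (hZ : IsClosed (Z : Set B))
    (f₀ : B) :
    ∀ ε > (0 : ℝ), ∃ fT ∈ Z, ∃ L : B →L[ℝ] ℝ,
      L (f₀ + fT) = ‖L‖ * ‖f₀ + fT‖ ∧ ‖L‖ = ‖f₀ + fT‖ ∧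
      ‖L.comp Z.subtypeL‖ < ε := by
  intro ε hε
  set δ : ℝ≥0 := ⟨ε / (‖f₀‖ + 1), by positivity⟩
  obtain ⟨fT, hfT, hle, hmin⟩ := Z.exists_mem_forall_norm_add_le hZ f₀ (δ := δ)
    (show 0 < ε / (‖f₀‖ + 1) by positivity)
  obtain ⟨φ, hφ, hφx, hφZ⟩ := Z.exists_dual_vector_of_forall_norm_le hmin
  have hL := norm_smul_eq_of_norm_le_one hφ hφx
  refine ⟨fT, hfT, ‖f₀ + fT‖ • φ, ?_, hL, ?_⟩
  · rw [hL, smul_apply, hφx, smul_eq_mul]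
  calc ‖(‖f₀ + fT‖ • φ).comp Z.subtypeL‖ ≤ ‖f₀ + fT‖ * ‖φ.comp Z.subtypeL‖ := by
        rw [ContinuousLinearMap.smul_comp]
        exact (ContinuousLinearMap.opNorm_smul_le _ _).trans_eq (by rw [norm_norm])
    _ ≤ ‖f₀‖ * (ε / (‖f₀‖ + 1)) := by gcongr; exact hφZ
    _ < ε := by
        rw [mul_div_assoc', div_lt_iff₀ (by positivity)]
        nlinarith [norm_nonneg f₀]

/-- If the distance from `f₀` to the closed subspace `Z` is not attained, then for every
`ε > 0` there are `f_T ∈ Z` and a duality element `L ∈ J(f₀ + f_T)` whose restriction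
to `Z` has norm less than `ε`. -/
theorem approximate_duality_element_of_not_proximinal
    {B : Type*} [NormedAddCommGroup B] [NormedSpace ℝ B] [CompleteSpace B]
    (Z : Submodule ℝ B) (hZ : IsClosed (Z : Set B))
    (f₀ : B)
    (hnot : ¬ ∃ z ∈ Z, ‖f₀ - z‖ = Metric.infDist f₀ (Z : Set B)) :
    ∀ ε > (0 : ℝ), ∃ fT ∈ Z, ∃ L : B →L[ℝ] ℝ,
      L (f₀ + fT) = ‖L‖ * ‖f₀ + fT‖ ∧ ‖L‖ = ‖f₀ + fT‖ ∧
      ‖L.comp Z.subtypeL‖ < ε :=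
  approximate_duality_element_of_not_proximinal_general Z hZ f₀
end

section
/- Let L = (n/(n+1))_{n≥1} ∈ ℓ∞ acting on ℓ¹, and let f₀ ∈ ℓ¹ satisfy L(f₀) = 1. Then ‖f₀‖₁ > 1, and for every L̂ ∈ ℓ∞ belonging to the duality set J(f₀) (i.e. L̂(f₀) = ‖L̂‖_∞·‖f₀‖₁ and ‖L̂‖_∞ = ‖f₀‖₁) we have ‖L̂ − cL‖_∞ ≥ ‖f₀‖₁ − 1 > 0 for c = 1; in particular dist(J(f₀), span{L}) is bounded below by a positive constant depending on f₀. -/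
/-!
Both claims come from one strict Hölder inequality for the `ℓ∞`–`ℓ¹` pairing: if `|g| ≤ C`
everywhere and `|g i| < C` at a point `i` with `f i ≠ 0`, then `∑ g f < C ‖f‖₁`. With `g = L`,
`C = 1` it gives `1 < ‖f₀‖₁`. Applied contrapositively to `g = L̂`, `C = ‖L̂‖` it forces
`|L̂ i| = ‖f₀‖₁` at such an `i`, while `|L i| < 1` there.
-/

open scoped ENNReal
/-- The sequence `(1/2, 2/3, 3/4, …)` as an element of `ℓ∞`. -/
noncomputable def Lseq : lp (fun _ : ℕ => ℝ) ∞ :=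
  ⟨fun n => ((n : ℝ) + 1) / ((n : ℝ) + 2), by
    apply memℓp_infty
    refine ⟨1, ?_⟩
    rintro x ⟨n, rfl⟩
    have h1 : (0 : ℝ) ≤ (n : ℝ) + 1 := by positivity
    have h2 : (0 : ℝ) < (n : ℝ) + 2 := by positivity
    simp only [Real.norm_eq_abs]
    rw [abs_of_nonneg (div_nonneg h1 h2.le)]
    rw [div_le_one h2]
    linarith⟩

namespace lp

variable {ι : Type*}

theorem summable_norm_of_one (f : lp (fun _ : ι => ℝ) 1) : Summable fun i => ‖f i‖ := by
  simpa using f.prop.summable (by simp)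

theorem norm_eq_tsum_norm_of_one (f : lp (fun _ : ι => ℝ) 1) : ‖f‖ = ∑' i, ‖f i‖ := by
  simp [norm_eq_tsum_rpow (p := 1) (by simp)]

theorem tsum_mul_lt_mul_norm (f : lp (fun _ : ι => ℝ) 1) {g : ι → ℝ} {C : ℝ}
    (hg : ∀ j, |g j| ≤ C) {i : ι} (hfi : f i ≠ 0) (hgi : |g i| < C) :
    ∑' j, g j * f j < C * ‖f‖ := by
  have hle : ∀ j, g j * f j ≤ C * ‖f j‖ := fun j =>
    calc g j * f j ≤ |g j| * ‖f j‖ := by rw [Real.norm_eq_abs, ← abs_mul]; exact le_abs_self _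
      _ ≤ C * ‖f j‖ := by gcongr; exact hg j
  have hlt : g i * f i < C * ‖f i‖ :=
    calc g i * f i ≤ |g i| * ‖f i‖ := by rw [Real.norm_eq_abs, ← abs_mul]; exact le_abs_self _
      _ < C * ‖f i‖ := by gcongr
  have hsum := (summable_norm_of_one f).mul_left C
  have hsum_mul : Summable fun j => g j * f j :=
    hsum.of_norm_bounded fun j => by rw [norm_mul, Real.norm_eq_abs]; gcongr; exact hg j
  calc ∑' j, g j * f j < ∑' j, C * ‖f j‖ := hsum_mul.tsum_lt_tsum hle hlt hsum
    _ = C * ‖f‖ := by rw [tsum_mul_left, norm_eq_tsum_norm_of_one]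

theorem norm_le_abs_of_tsum_mul_eq (f : lp (fun _ : ι => ℝ) 1) (g : lp (fun _ : ι => ℝ) ∞)
    (hgf : ∑' j, g j * f j = ‖g‖ * ‖f‖) {i : ι} (hfi : f i ≠ 0) : ‖g‖ ≤ |g i| := by
  by_contra! hgi
  exact (tsum_mul_lt_mul_norm f (fun j => norm_apply_le_norm ENNReal.top_ne_zero g j) hfi hgi).ne
    hgf

end lp

theorem abs_Lseq_lt_one (n : ℕ) : |Lseq n| < 1 := by
  change |((n : ℝ) + 1) / ((n : ℝ) + 2)| < 1
  rw [abs_of_nonneg (by positivity), div_lt_one (by positivity)]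
  linarith

/-- If `f₀ ∈ ℓ¹` interpolates `L(f₀) = 1` for `L = (n/(n+1))ₙ`, then `‖f₀‖ > 1` and any
duality element `L̂ ∈ J(f₀)` is at distance at least `‖f₀‖₁ - 1 > 0` from `L`. -/
theorem duality_elements_far_from_L
    (f₀ : lp (fun _ : ℕ => ℝ) 1)
    (hinterp : (∑' n : ℕ, Lseq n * f₀ n) = 1) :
    1 < ‖f₀‖ ∧
    ∀ Lhat : lp (fun _ : ℕ => ℝ) ∞,
      (∑' n : ℕ, Lhat n * f₀ n) = ‖Lhat‖ * ‖f₀‖ → ‖Lhat‖ = ‖f₀‖ →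
      ‖Lhat - Lseq‖ ≥ ‖f₀‖ - 1 := by
  obtain ⟨i, hi⟩ : ∃ i, f₀ i ≠ 0 := by
    by_contra! h
    simp [h] at hinterp
  have hL : ∀ n, |Lseq n| ≤ 1 := fun n => (abs_Lseq_lt_one n).le
  refine ⟨by simpa [hinterp] using lp.tsum_mul_lt_mul_norm f₀ hL hi (abs_Lseq_lt_one i),
    fun Lhat hdual hnorm => ?_⟩
  have hLhat := lp.norm_le_abs_of_tsum_mul_eq f₀ Lhat hdual hi
  calc ‖f₀‖ - 1 ≤ |Lhat i| - |Lseq i| := by linarith [hL i]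
    _ ≤ |Lhat i - Lseq i| := abs_sub_abs_le_abs_sub _ _
    _ = ‖(Lhat - Lseq) i‖ := by rw [lp.coeFn_sub, Pi.sub_apply, Real.norm_eq_abs]
    _ ≤ ‖Lhat - Lseq‖ := lp.norm_apply_le_norm ENNReal.top_ne_zero _ i
end
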